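/- Let q ≥ 3 be an integer and β > 1 a real, and set β̂ = 1 + (β−1)²/((q−1)(2β+q−2)), γ̂ = 1 + (β−1)²/(2β+q−2), λ̂ = 1/(q−1), ω(B) = (1 + β̂γ̂ − β̂B − γ̂/B)/(1 − β̂γ̂) and θ(B) = 2β(B−1)(B+q−1)/(B(β−1)(β+q−1)). Let I be a nondegenerate closed interval contained in (1, γ̂). Then there do not exist K, L ∈ ℝ such that for all x₁, x₂ ∈ I the equation K·log(r) + L = θ(r) − ω(r)·(K·log(x₁) + K·log(x₂) + 2L) holds, where r = (1 + γ̂λ̂x₁x₂)/(β̂ + λ̂x₁x₂). In other words, no function of the form F(x) = K·log(x) + L can satisfy F(r(x₁,x₂)) = θ(r(x₁,x₂)) − ω(r(x₁,x₂))(F(x₁) + F(x₂)) for all x₁, x₂ ∈ I. -/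

import Mathlib

/-- `ω(B) = (1 + β̂γ̂ − β̂B − γ̂/B)/(1 − β̂γ̂)`. -/
noncomputable def omegaP (βh γh B : ℝ) : ℝ := (1 + βh * γh - βh * B - γh / B) / (1 - βh * γh)

/-- `θ(B) = 2β(B−1)(B+q−1)/(B(β−1)(β+q−1))`. -/
noncomputable def thetaP (q : ℕ) (β B : ℝ) : ℝ :=
  2 * β * (B - 1) * (B + q - 1) / (B * (β - 1) * (β + q - 1))

/-!
Restrict to the diagonal `x₁ = x₂ = x` and put `y = r(x, x)`. Then `λ̂x²(γ̂ − y) = β̂y − 1`, so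
`2 log x = log(β̂y − 1) − log λ̂ − log(γ̂ − y)`, and multiplying the equation by `(β̂γ̂ − 1)y`, which
turns `θ` and `ω` into polynomials, leaves `K·ψ(y) = Q(y)` on the nondegenerate interval
`r([lo, hi])`, where `Q` is quadratic and
`ψ(y) = (β̂γ̂ − 1) y log y − (β̂y − 1)(γ̂ − y) log((β̂y − 1)/(γ̂ − y))`.
Now `ψ''' = (β̂γ̂ − 1)((β̂γ̂ − 1)²/((β̂y − 1)(γ̂ − y))² − 1/y²) > 0`, so three differentiations give
`K = 0` and then `Q = 0`. The leading and constant coefficients of `Q` then say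
`2β̂L = (β̂γ̂ − 1)c` and `2γ̂L = −(q − 1)(β̂γ̂ − 1)c` with `c = 2β/((β − 1)(β + q − 1)) > 0`,
which is impossible.
-/

open Real Set

theorem eqOn_zero_of_hasDerivAt_of_eqOn_zero {f f' : ℝ → ℝ} {s : Set ℝ} (hs : IsOpen s)
    (hf : EqOn f 0 s) (hd : ∀ y ∈ s, HasDerivAt f (f' y) y) : EqOn f' 0 s := fun y hy =>
  (hd y hy).unique <| (hasDerivAt_const y 0).congr_of_eventuallyEq <|
    hf.eventuallyEq_of_mem (hs.mem_nhds hy)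

theorem hasDerivAt_quadratic (a b c y : ℝ) :
    HasDerivAt (fun y => a * y ^ 2 + b * y + c) (2 * a * y + b) y :=
  ((((hasDerivAt_pow 2 y).const_mul a).add ((hasDerivAt_id' y).const_mul b)).add_const
    c).congr_deriv (by ring)

theorem eq_zero_of_mul_eq_quadratic {f f' f'' f''' : ℝ → ℝ} {s : Set ℝ} (hs : IsOpen s)
    (hf : ∀ y ∈ s, HasDerivAt f (f' y) y) (hf' : ∀ y ∈ s, HasDerivAt f' (f'' y) y)
    (hf'' : ∀ y ∈ s, HasDerivAt f'' (f''' y) y) {y₀ : ℝ} (hy₀ : y₀ ∈ s) (hf''' : f''' y₀ ≠ 0)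
    {K a b c : ℝ} (heq : ∀ y ∈ s, K * f y = a * y ^ 2 + b * y + c) :
    K = 0 ∧ a = 0 ∧ b = 0 ∧ c = 0 := by
  have h₀ : EqOn (fun y => K * f y - (a * y ^ 2 + b * y + c)) 0 s := fun y hy =>
    sub_eq_zero.2 (heq y hy)
  have h₁ : EqOn (fun y => K * f' y - (2 * a * y + b)) 0 s :=
    eqOn_zero_of_hasDerivAt_of_eqOn_zero hs h₀ fun y hy =>
      ((hf y hy).const_mul K).sub (hasDerivAt_quadratic a b c y)
  have h₂ : EqOn (fun y => K * f'' y - 2 * a) 0 s :=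
    eqOn_zero_of_hasDerivAt_of_eqOn_zero hs h₁ fun y hy =>
      (((hf' y hy).const_mul K).sub (((hasDerivAt_id' y).const_mul (2 * a)).add_const b)).congr_deriv
        (by ring)
  have h₃ : EqOn (fun y => K * f''' y) 0 s :=
    eqOn_zero_of_hasDerivAt_of_eqOn_zero hs h₂ fun y hy =>
      (((hf'' y hy).const_mul K).sub_const (2 * a)).congr_deriv (by ring)
  have hK : K = 0 := (mul_eq_zero.1 (h₃ hy₀)).resolve_right hf'''
  have ha : a = 0 := by simpa [hK] using h₂ hy₀
  have hb : b = 0 := by simpa [hK, ha] using h₁ hy₀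
  have hc : c = 0 := by simpa [hK, ha, hb] using h₀ hy₀
  exact ⟨hK, ha, hb, hc⟩

noncomputable section

namespace PottsGadget

variable {A G y : ℝ}

def logRatio (A G y : ℝ) : ℝ := log (A * y - 1) - log (G - y)

def psi (A G y : ℝ) : ℝ := (A * G - 1) * (y * log y) - (A * y - 1) * (G - y) * logRatio A G y

def psi' (A G y : ℝ) : ℝ := (A * G - 1) * log y - (A * G + 1 - 2 * A * y) * logRatio A G y

def psi'' (A G y : ℝ) : ℝ :=
  (A * G - 1) / y + 2 * A * logRatio A G y -
    (A * G - 1) * (A * G + 1 - 2 * A * y) / ((A * y - 1) * (G - y))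

def psi''' (A G y : ℝ) : ℝ :=
  (A * G - 1) * ((A * G - 1) ^ 2 / ((A * y - 1) * (G - y)) ^ 2 - 1 / y ^ 2)

theorem hasDerivAt_logRatio (h₁ : 0 < A * y - 1) (h₂ : 0 < G - y) :
    HasDerivAt (logRatio A G) ((A * G - 1) / ((A * y - 1) * (G - y))) y := by
  refine (((((hasDerivAt_id' y).const_mul A).sub_const 1).log h₁.ne').sub
    (((hasDerivAt_id' y).const_sub G).log h₂.ne')).congr_deriv ?_
  field_simp
  ring

theorem hasDerivAt_mul_sub_one_mul_sub :
    HasDerivAt (fun y => (A * y - 1) * (G - y)) (A * G + 1 - 2 * A * y) y :=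
  ((((hasDerivAt_id' y).const_mul A).sub_const 1).mul ((hasDerivAt_id' y).const_sub G)).congr_deriv
    (by ring)

theorem hasDerivAt_psi (hy : 0 < y) (h₁ : 0 < A * y - 1) (h₂ : 0 < G - y) :
    HasDerivAt (psi A G) (psi' A G y) y := by
  refine ((((hasDerivAt_id' y).mul (hasDerivAt_log hy.ne')).const_mul (A * G - 1)).sub
    (hasDerivAt_mul_sub_one_mul_sub.mul (hasDerivAt_logRatio h₁ h₂))).congr_deriv ?_
  unfold psi'
  field_simp
  ring

theorem hasDerivAt_psi' (hy : 0 < y) (h₁ : 0 < A * y - 1) (h₂ : 0 < G - y) :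
    HasDerivAt (psi' A G) (psi'' A G y) y := by
  refine (((hasDerivAt_log hy.ne').const_mul (A * G - 1)).sub
    ((((hasDerivAt_id' y).const_mul (2 * A)).const_sub (A * G + 1)).mul
      (hasDerivAt_logRatio h₁ h₂))).congr_deriv ?_
  unfold psi''
  field_simp
  ring

/-- The simple closed form of `psi'''` comes from the identity
`(A * G + 1 - 2 * A * y) ^ 2 + 4 * A * ((A * y - 1) * (G - y)) = (A * G - 1) ^ 2`. -/
theorem hasDerivAt_psi'' (hy : 0 < y) (h₁ : 0 < A * y - 1) (h₂ : 0 < G - y) :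
    HasDerivAt (psi'' A G) (psi''' A G y) y := by
  refine (((((hasDerivAt_const y (A * G - 1)).div (hasDerivAt_id' y) hy.ne').add
    ((hasDerivAt_logRatio h₁ h₂).const_mul (2 * A))).sub
    (((((hasDerivAt_id' y).const_mul (2 * A)).const_sub (A * G + 1)).const_mul (A * G - 1)).div
      hasDerivAt_mul_sub_one_mul_sub (mul_pos h₁ h₂).ne')) :
      HasDerivAt (psi'' A G) _ y).congr_deriv ?_
  -- the form in which `field_simp` meets this denominator
  have : y * A - 1 ≠ 0 := by rw [mul_comm]; exact h₁.ne'
  unfold psi'''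
  field_simp
  ring

theorem psi'''_pos (hy : 0 < y) (h₁ : 0 < A * y - 1) (h₂ : 0 < G - y) : 0 < psi''' A G y := by
  have hu : 0 < (A * y - 1) * (G - y) := mul_pos h₁ h₂
  have hlt : (A * y - 1) * (G - y) < (A * G - 1) * y := by
    have : (A * G - 1) * y - (A * y - 1) * (G - y) = y * (A * y - 1) + (G - y) := by ring
    nlinarith [mul_pos hy h₁]
  have hAG : 0 < A * G - 1 := by nlinarith
  unfold psi'''
  refine mul_pos hAG (sub_pos.2 ?_)
  rw [div_lt_div_iff₀ (by positivity) (by positivity)]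
  nlinarith [mul_lt_mul'' hlt hlt hu.le hu.le]

theorem eq_zero_of_mul_psi_eq_quadratic {s : Set ℝ} (hs : IsOpen s) (hne : s.Nonempty)
    (hdom : ∀ y ∈ s, 0 < y ∧ 0 < A * y - 1 ∧ 0 < G - y) {K a b c : ℝ}
    (heq : ∀ y ∈ s, K * psi A G y = a * y ^ 2 + b * y + c) : K = 0 ∧ a = 0 ∧ b = 0 ∧ c = 0 := by
  obtain ⟨y₀, hy₀⟩ := hne
  obtain ⟨hy, h₁, h₂⟩ := hdom y₀ hy₀
  exact eq_zero_of_mul_eq_quadratic hs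
    (fun y hy => hasDerivAt_psi (hdom y hy).1 (hdom y hy).2.1 (hdom y hy).2.2)
    (fun y hy => hasDerivAt_psi' (hdom y hy).1 (hdom y hy).2.1 (hdom y hy).2.2)
    (fun y hy => hasDerivAt_psi'' (hdom y hy).1 (hdom y hy).2.1 (hdom y hy).2.2)
    hy₀ (psi'''_pos hy h₁ h₂).ne' heq

def gadgetMap (A G lam x₁ x₂ : ℝ) : ℝ := (1 + G * lam * x₁ * x₂) / (A + lam * x₁ * x₂)

variable {lam x : ℝ}

theorem gadgetMap_mul_sub (hA : 0 < A) (hlam : 0 < lam) :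
    lam * x ^ 2 * (G - gadgetMap A G lam x x) = A * gadgetMap A G lam x x - 1 := by
  have : 0 < A + lam * x * x := by nlinarith [mul_nonneg hlam.le (mul_self_nonneg x)]
  unfold gadgetMap
  field_simp
  ring

theorem gadgetMap_bounds (hA : 0 < A) (hAG : 1 < A * G) (hlam : 0 < lam) (hx : x ≠ 0) :
    0 < gadgetMap A G lam x x ∧ 0 < A * gadgetMap A G lam x x - 1 ∧
      0 < G - gadgetMap A G lam x x := by
  have hden : 0 < A + lam * x * x := by nlinarith [mul_nonneg hlam.le (mul_self_nonneg x)]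
  have hG : G - gadgetMap A G lam x x = (A * G - 1) / (A + lam * x * x) := by
    unfold gadgetMap
    field_simp
    ring
  have h₂ : 0 < G - gadgetMap A G lam x x := hG ▸ div_pos (by linarith) hden
  have h₁ : 0 < A * gadgetMap A G lam x x - 1 := by
    rw [← gadgetMap_mul_sub hA hlam]
    positivity
  exact ⟨by nlinarith, h₁, h₂⟩

theorem strictMonoOn_gadgetMap (hA : 0 < A) (hAG : 1 < A * G) (hlam : 0 < lam) :
    StrictMonoOn (fun x => gadgetMap A G lam x x) (Ici 0) := by
  intro x₁ hx₁ x₂ _ h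
  have hsq : lam * x₁ * x₁ < lam * x₂ * x₂ := by
    rw [mul_assoc, mul_assoc]
    exact mul_lt_mul_of_pos_left (by nlinarith [mem_Ici.1 hx₁]) hlam
  have h0 : 0 ≤ lam * x₁ * x₁ := mul_nonneg (mul_nonneg hlam.le hx₁) hx₁
  simp only [gadgetMap]
  rw [div_lt_div_iff₀ (by linarith) (by linarith)]
  nlinarith

theorem continuous_gadgetMap (hA : 0 < A) (hlam : 0 < lam) :
    Continuous fun x => gadgetMap A G lam x x :=
  Continuous.div (by fun_prop) (by fun_prop) fun x => by
    nlinarith [mul_nonneg hlam.le (mul_self_nonneg x)]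

theorem mem_domain_of_mem_Ioo_gadgetMap (hA : 0 < A) (hAG : 1 < A * G) (hlam : 0 < lam)
    {lo hi : ℝ} (hlo : 0 < lo) (hlohi : lo < hi)
    (hy : y ∈ Ioo (gadgetMap A G lam lo lo) (gadgetMap A G lam hi hi)) :
    0 < y ∧ 0 < A * y - 1 ∧ 0 < G - y := by
  obtain ⟨hlo₀, hlo₁, -⟩ := gadgetMap_bounds hA hAG hlam hlo.ne'
  obtain ⟨-, -, hhi₂⟩ := gadgetMap_bounds hA hAG hlam (hlo.trans hlohi).ne'
  exact ⟨by linarith [hy.1], by nlinarith [hy.1], by linarith [hy.2]⟩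

theorem mul_psi_eq_of_functional_eq {q : ℕ} {β K L : ℝ} (hA : 0 < A) (hAG : 1 < A * G)
    (hlam : 0 < lam) (hx : 0 < x) (hy : gadgetMap A G lam x x = y)
    (h : K * log y + L = thetaP q β y - omegaP A G y * (K * log x + K * log x + 2 * L)) :
    K * psi A G y = (A * G - 1) * (2 * β / ((β - 1) * (β + q - 1))) * ((y - 1) * (y + q - 1)) -
      (A * G - 1) * L * y + (2 * L - K * log lam) * ((A * y - 1) * (G - y)) := by
  subst hy
  obtain ⟨hy, h₁, h₂⟩ := gadgetMap_bounds hA hAG hlam hx.ne'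
  have hlog : log x + log x = logRatio A G (gadgetMap A G lam x x) - log lam := by
    rw [logRatio, ← gadgetMap_mul_sub hA hlam, log_mul (by positivity) h₂.ne',
      log_mul hlam.ne' (by positivity), log_pow]
    push_cast
    ring
  set y := gadgetMap A G lam x x
  have hθ : thetaP q β y * ((A * G - 1) * y) =
      (A * G - 1) * (2 * β / ((β - 1) * (β + q - 1))) * ((y - 1) * (y + q - 1)) := by
    unfold thetaP
    field_simp
  have hω : omegaP A G y * ((A * G - 1) * y) = -((A * y - 1) * (G - y)) := by
    have : 1 - A * G ≠ 0 := by linarith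
    unfold omegaP
    field_simp
    ring
  unfold psi
  linear_combination (A * G - 1) * y * h + hθ - (K * (log x + log x) + 2 * L) * hω +
    K * (A * y - 1) * (G - y) * hlog

end PottsGadget

end

open PottsGadget

/-- for the ferromagnetic Potts model, no function of the form
`F(x) = K log x + L` can satisfy the functional equation
`F(r(x₁,x₂)) = θ(r(x₁,x₂)) − ω(r(x₁,x₂))(F(x₁) + F(x₂))` on a nondegenerate closed interval
contained in `(1,γ̂)`. -/
theorem stmt_7 (q : ℕ) (hq : 3 ≤ q) (β : ℝ) (hβ : 1 < β)
    (βh γh lamh : ℝ)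
    (hβh : βh = 1 + (β - 1) ^ 2 / (((q : ℝ) - 1) * (2 * β + q - 2)))
    (hγh : γh = 1 + (β - 1) ^ 2 / (2 * β + q - 2))
    (hlamh : lamh = 1 / ((q : ℝ) - 1))
    (lo hi : ℝ) (hlohi : lo < hi) (hI : Set.Icc lo hi ⊆ Set.Ioo 1 γh) :
    ¬ ∃ K L : ℝ, ∀ x₁ ∈ Set.Icc lo hi, ∀ x₂ ∈ Set.Icc lo hi,
      K * Real.log ((1 + γh * lamh * x₁ * x₂) / (βh + lamh * x₁ * x₂)) + L =
        thetaP q β ((1 + γh * lamh * x₁ * x₂) / (βh + lamh * x₁ * x₂)) -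
          omegaP βh γh ((1 + γh * lamh * x₁ * x₂) / (βh + lamh * x₁ * x₂)) *
            (K * Real.log x₁ + K * Real.log x₂ + 2 * L) := by
  rintro ⟨K, L, H⟩
  have hq' : (3 : ℝ) ≤ q := by exact_mod_cast hq
  have hsq : 0 < (β - 1) ^ 2 := pow_pos (sub_pos.2 hβ) 2
  have hA₁ : 1 < βh := hβh ▸ lt_add_of_pos_right 1 (div_pos hsq (by nlinarith))
  have hG₁ : 1 < γh := hγh ▸ lt_add_of_pos_right 1 (div_pos hsq (by linarith))
  have hA : 0 < βh := by linarith
  have hAG : 1 < βh * γh := by nlinarith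
  have hlam : 0 < lamh := hlamh ▸ one_div_pos.2 (by linarith)
  have hlo : 0 < lo := by linarith [(hI ⟨le_rfl, hlohi.le⟩).1]
  set c₀ := 2 * β / ((β - 1) * (β + q - 1))
  set M := 2 * L - K * log lamh
  have hquad : ∀ y ∈ Ioo (gadgetMap βh γh lamh lo lo) (gadgetMap βh γh lamh hi hi),
      K * psi βh γh y = ((βh * γh - 1) * c₀ - βh * M) * y ^ 2 +
        ((βh * γh - 1) * c₀ * (q - 2) - (βh * γh - 1) * L + (βh * γh + 1) * M) * y +
        (-(βh * γh - 1) * c₀ * (q - 1) - γh * M) := by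
    intro y hy
    obtain ⟨x, hx, rfl⟩ := intermediate_value_Icc hlohi.le
      (continuous_gadgetMap hA hlam).continuousOn (Ioo_subset_Icc_self hy)
    linear_combination mul_psi_eq_of_functional_eq hA hAG hlam (hlo.trans_le hx.1) rfl
      (H x hx x hx)
  obtain ⟨-, ha, -, hc⟩ := eq_zero_of_mul_psi_eq_quadratic isOpen_Ioo
    (nonempty_Ioo.2 (strictMonoOn_gadgetMap hA hAG hlam hlo.le (hlo.le.trans hlohi.le) hlohi))
    (fun y hy => mem_domain_of_mem_Ioo_gadgetMap hA hAG hlam hlo hlohi hy) hquad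
  have hpos : 0 < (βh * γh - 1) * c₀ * (γh + βh * (q - 1)) :=
    mul_pos (mul_pos (sub_pos.2 hAG) (div_pos (by linarith) (by nlinarith))) (by nlinarith)
  exact hpos.ne' (by linear_combination γh * ha - βh * hc)
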